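/- Let b*>0 and K∈(0,1), let τ∈(0,∞], and let F:[0,τ)→ℝ be differentiable with F(0) > b*/K and F'(t) ≥ (1/2)·K·e^{−b*·t/2}·F(t)² for all t∈[0,τ). Then τ is finite; more precisely, τ ≤ −(2/b*)·log(1 − b*/(K·F(0))). -/

import Mathlib

open MeasureTheory Filter Topology Real Set

noncomputable section

/-- Fourier transform `f̂(ξ) = ∫ e^{-i ξ x} f(x) dx` of a real-valued function. -/
def fhat (f : ℝ → ℝ) (ξ : ℝ) : ℂ :=
  ∫ x : ℝ, Complex.exp (-(Complex.I * ξ * x)) * (f x : ℂ)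

/-- Squared `H^s` norm: `∫ (1+ξ²)^s |f̂(ξ)|² dξ`. -/
def hsNormSq (s : ℝ) (f : ℝ → ℝ) : ℝ :=
  ∫ ξ : ℝ, (1 + ξ ^ 2) ^ s * ‖fhat f ξ‖ ^ 2

/-- `H^s` norm. -/
def hsNorm (s : ℝ) (f : ℝ → ℝ) : ℝ := Real.sqrt (hsNormSq s f)

/-- `H^s` inner product `(f,g)_{H^s} = ∫ (1+ξ²)^s f̂(ξ) conj(ĝ(ξ)) dξ`. -/
def hsInner (s : ℝ) (f g : ℝ → ℝ) : ℂ :=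
  ∫ ξ : ℝ, (((1 + ξ ^ 2) ^ s : ℝ) : ℂ) * (fhat f ξ * (starRingEnd ℂ) (fhat g ξ))

/-- Membership in the Sobolev space `H^s(ℝ)`. -/
def MemHs (s : ℝ) (f : ℝ → ℝ) : Prop :=
  AEStronglyMeasurable f volume ∧
    Integrable (fun ξ : ℝ => (1 + ξ ^ 2) ^ s * ‖fhat f ξ‖ ^ 2)

/-- The Hilbert transform `Hf(x) = (1/π) p.v. ∫ f(y)/(y-x) dy`. -/
def hilbert (f : ℝ → ℝ) (x : ℝ) : ℝ :=
  limUnder (𝓝[>] (0 : ℝ))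
    (fun ε => (1 / π) * ∫ y in {y : ℝ | ε < |y - x|}, f y / (y - x))

/-- The `L^∞` norm. -/
def linfNorm (f : ℝ → ℝ) : ℝ := (eLpNorm f ⊤ volume).toReal

/-- Friedrichs mollification `J_ε f = j_ε ⋆ f`. -/
def mollify (j : ℝ → ℝ) (ε : ℝ) (f : ℝ → ℝ) (x : ℝ) : ℝ :=
  ∫ y : ℝ, ε⁻¹ * j ((x - y) / ε) * f y

/-- `j` is an admissible mollifier kernel: a Schwartz function with
`0 ≤ ĵ ≤ 1` and `ĵ(ξ) = 1` for `|ξ| ≤ 1`. -/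
def IsMollifierKernel (j : ℝ → ℝ) : Prop :=
  (∃ J : SchwartzMap ℝ ℝ, ⇑J = j) ∧
    (∀ ξ : ℝ, (fhat j ξ).im = 0 ∧ 0 ≤ (fhat j ξ).re ∧ (fhat j ξ).re ≤ 1) ∧
    (∀ ξ : ℝ, |ξ| ≤ 1 → fhat j ξ = 1)

/-- `χ` is a smooth cutoff `χ_R : [0,∞) → [0,1]` with `χ_R ≡ 1` on `[0,R]`
and `χ_R ≡ 0` on `(2R, ∞)`. -/
def IsCutoff (R : ℝ) (χ : ℝ → ℝ) : Prop :=
  (∀ n : ℕ, ContDiff ℝ n χ) ∧ (∀ x, 0 ≤ χ x ∧ χ x ≤ 1) ∧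
    (∀ x ∈ Icc (0 : ℝ) R, χ x = 1) ∧ (∀ x, 2 * R < x → χ x = 0)

/-- Inverse Fourier transform. -/
def finv (g : ℝ → ℂ) (x : ℝ) : ℂ :=
  (1 / (2 * π)) * ∫ ξ : ℝ, Complex.exp (Complex.I * ξ * x) * g ξ

/-- `D^s = (1-∂_x²)^{s/2}`, the Fourier multiplier with symbol `(1+ξ²)^{s/2}`. -/
def Dop (s : ℝ) (f : ℝ → ℝ) (x : ℝ) : ℂ :=
  finv (fun ξ => (((1 + ξ ^ 2) ^ (s / 2) : ℝ) : ℂ) * fhat f ξ) x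

/-- `Λ = (-∂_x²)^{1/2}`, the Fourier multiplier with symbol `|ξ|`. -/
def lamOp (f : ℝ → ℝ) (x : ℝ) : ℝ :=
  (finv (fun ξ => ((|ξ| : ℝ) : ℂ) * fhat f ξ) x).re

/-- `L²` inner product of complex-valued functions. -/
def l2InnerC (f g : ℝ → ℂ) : ℂ := ∫ x : ℝ, f x * (starRingEnd ℂ) (g x)

/-- `u : time → space → ℝ` is a continuous `H^s`-valued map on `I`. -/
def ContInHs (s : ℝ) (I : Set ℝ) (u : ℝ → ℝ → ℝ) : Prop :=
  (∀ t ∈ I, MemHs s (u t)) ∧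
    ∀ t₀ ∈ I, Tendsto (fun t => hsNorm s (fun x => u t x - u t₀ x)) (𝓝[I] t₀) (𝓝 0)

/-- `v` is the `H^s`-valued time derivative of `u` on `I`. -/
def HasHsDerivOn (s : ℝ) (I : Set ℝ) (u v : ℝ → ℝ → ℝ) : Prop :=
  ∀ t₀ ∈ I,
    Tendsto (fun t => hsNorm s (fun x => (u t x - u t₀ x) / (t - t₀) - v t₀ x))
      (𝓝[I \ {t₀}] t₀) (𝓝 0)

/-- `u` is a solution of the CCF equation `u_t + (Hu)·u_x = 0` on the time
interval `I`, in the class `C(I;H^s) ∩ C¹(I;H^{s-1})`. -/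
def IsCCFSol (s : ℝ) (I : Set ℝ) (u : ℝ → ℝ → ℝ) : Prop :=
  ContInHs s I u ∧
    HasHsDerivOn (s - 1) I u (fun t x => -(hilbert (u t) x * deriv (u t) x)) ∧
    ContInHs (s - 1) I (fun t x => -(hilbert (u t) x * deriv (u t) x))


/-- Riccati-type blow-up: if `F : [0,τ) → ℝ` satisfies
`F(0) > b*/K` and `F'(t) ≥ ½ K e^{−b*t/2} F(t)²`, then `τ` is finite, with
`τ ≤ −(2/b*) log(1 − b*/(K F(0)))`. -/
theorem statement_10 (bstar K : ℝ) (hb : 0 < bstar) (hK0 : 0 < K) (hK1 : K < 1)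
    (τ : ENNReal) (hτ : 0 < τ)
    (I : Set ℝ) (hI : I = {t : ℝ | 0 ≤ t ∧ ENNReal.ofReal t < τ})
    (F F' : ℝ → ℝ) (hF0 : bstar / K < F 0)
    (hF : ∀ t ∈ I, HasDerivWithinAt F (F' t) I t ∧
      (1 / 2) * K * Real.exp (-(bstar * t) / 2) * (F t) ^ 2 ≤ F' t) :
    τ < ⊤ ∧ τ ≤ ENNReal.ofReal (-(2 / bstar) * Real.log (1 - bstar / (K * F 0))) := by
  subst hI
  set c : ℝ := 1 - bstar / (K * F 0) with hc
  have hF0pos : 0 < F 0 := lt_trans (div_pos hb hK0) hF0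
  have hKF0 : 0 < K * F 0 := mul_pos hK0 hF0pos
  have hfrac0 : 0 < bstar / (K * F 0) := div_pos hb hKF0
  have hfrac1 : bstar / (K * F 0) < 1 := by
    rw [div_lt_one hKF0]
    have : K * (bstar / K) < K * F 0 := mul_lt_mul_of_pos_left hF0 hK0
    calc bstar = K * (bstar / K) := by field_simp
      _ < K * F 0 := this
  have hcpos : 0 < c := by rw [hc]; linarith
  have hc1 : c < 1 := by rw [hc]; linarith
  set T : ℝ := -(2 / bstar) * Real.log c with hT
  have hlogc : Real.log c < 0 := Real.log_neg hcpos hc1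
  have hTpos : 0 < T := by
    have h2b : 0 < 2 / bstar := by positivity
    nlinarith
  have key : ∀ t ∈ {t : ℝ | 0 ≤ t ∧ ENNReal.ofReal t < τ}, t < T := by
    intro t ht
    obtain ⟨ht0, htτ⟩ := ht
    have hsubI : Icc 0 t ⊆ {t : ℝ | 0 ≤ t ∧ ENNReal.ofReal t < τ} := fun s hs =>
      ⟨hs.1, lt_of_le_of_lt (ENNReal.ofReal_le_ofReal hs.2) htτ⟩
    have hIooI : Ioo 0 t ⊆ {t : ℝ | 0 ≤ t ∧ ENNReal.ofReal t < τ} := fun s hs =>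
      hsubI (Ioo_subset_Icc_self hs)
    have hDA : ∀ s ∈ Ioo 0 t, HasDerivAt F (F' s) s := by
      intro s hs
      exact ((hF s (hIooI hs)).1).hasDerivAt
        (mem_nhds_iff.mpr ⟨Ioo 0 t, hIooI, isOpen_Ioo, hs⟩)
    have hcontF : ContinuousOn F (Icc 0 t) := fun s hs =>
      ((hF s (hsubI hs)).1.continuousWithinAt).mono hsubI
    have hF'nonneg : ∀ s ∈ {t : ℝ | 0 ≤ t ∧ ENNReal.ofReal t < τ}, 0 ≤ F' s := fun s hs =>
      le_trans (by positivity) (hF s hs).2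
    have hmono : MonotoneOn F (Icc 0 t) := by
      apply monotoneOn_of_deriv_nonneg (convex_Icc 0 t) hcontF
      · intro s hs
        rw [interior_Icc] at hs
        exact (hDA s hs).differentiableAt.differentiableWithinAt
      · intro s hs
        rw [interior_Icc] at hs
        rw [(hDA s hs).deriv]
        exact hF'nonneg s (hIooI hs)
    have hFpos : ∀ s ∈ Icc 0 t, 0 < F s := fun s hs =>
      lt_of_lt_of_le hF0pos (hmono (left_mem_Icc.mpr ht0) hs hs.1)
    set H : ℝ → ℝ := fun s => (F s)⁻¹ + K / bstar * (1 - Real.exp (-(bstar * s) / 2)) with hH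
    have hDH : ∀ s ∈ Ioo 0 t,
        HasDerivAt H (-F' s / F s ^ 2 + K / 2 * Real.exp (-(bstar * s) / 2)) s := by
      intro s hs
      have h1 : HasDerivAt (fun x => (F x)⁻¹) (-F' s / F s ^ 2) s :=
        (hDA s hs).inv (ne_of_gt (hFpos s (Ioo_subset_Icc_self hs)))
      have h2 : HasDerivAt (fun x : ℝ => Real.exp (-(bstar * x) / 2))
          (Real.exp (-(bstar * s) / 2) * (-bstar / 2)) s := by
        have hlin : HasDerivAt (fun x : ℝ => -(bstar * x) / 2) (-bstar / 2) s := by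
          simpa [neg_div] using ((hasDerivAt_id s).const_mul bstar).neg.div_const 2
        exact (Real.hasDerivAt_exp _).comp s hlin
      have h3 : HasDerivAt (fun x : ℝ => K / bstar * (1 - Real.exp (-(bstar * x) / 2)))
          (K / bstar * (0 - Real.exp (-(bstar * s) / 2) * (-bstar / 2))) s :=
        ((hasDerivAt_const s (1 : ℝ)).sub h2).const_mul _
      have := h1.add h3
      refine HasDerivAt.congr_deriv this ?_
      have hbne : bstar ≠ 0 := ne_of_gt hb
      field_simp
      ring
    have hcontH : ContinuousOn H (Icc 0 t) := by
      apply ContinuousOn.add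
      · exact hcontF.inv₀ fun s hs => ne_of_gt (hFpos s hs)
      · exact (continuous_const.mul (continuous_const.sub
          ((continuous_const.mul continuous_id).neg.div_const 2).rexp)).continuousOn
    have hanti : AntitoneOn H (Icc 0 t) := by
      apply antitoneOn_of_deriv_nonpos (convex_Icc 0 t) hcontH
      · intro s hs
        rw [interior_Icc] at hs
        exact (hDH s hs).differentiableAt.differentiableWithinAt
      · intro s hs
        rw [interior_Icc] at hs
        rw [(hDH s hs).deriv]
        have hFs := hFpos s (Ioo_subset_Icc_self hs)
        have hineq := (hF s (hIooI hs)).2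
        have he : (0 : ℝ) < Real.exp (-(bstar * s) / 2) := Real.exp_pos _
        have h2 : K / 2 * Real.exp (-(bstar * s) / 2) ≤ F' s / F s ^ 2 := by
          rw [le_div_iff₀ (by positivity)]
          nlinarith
        have : -F' s / F s ^ 2 = -(F' s / F s ^ 2) := by ring
        rw [this]
        linarith
    have hHle : H t ≤ H 0 :=
      hanti (left_mem_Icc.mpr ht0) (right_mem_Icc.mpr ht0) ht0
    have hH0 : H 0 = (F 0)⁻¹ := by simp [hH]
    have hFtinv : 0 < (F t)⁻¹ := inv_pos.mpr (hFpos t (right_mem_Icc.mpr ht0))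
    set E : ℝ := Real.exp (-(bstar * t) / 2) with hE
    have hHt : H t = (F t)⁻¹ + K / bstar * (1 - E) := rfl
    have hstep : K / bstar * (1 - E) < (F 0)⁻¹ := by
      rw [hH0, hHt] at hHle; linarith
    have hEc : c < E := by
      have hKb : 0 < K / bstar := by positivity
      have h1E : 1 - E < (F 0)⁻¹ * (bstar / K) := by
        rw [← lt_div_iff₀' hKb] at hstep
        calc 1 - E < (F 0)⁻¹ / (K / bstar) := hstep
          _ = (F 0)⁻¹ * (bstar / K) := by
            rw [div_div_eq_mul_div]; ring
      have : (F 0)⁻¹ * (bstar / K) = bstar / (K * F 0) := by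
        rw [eq_div_iff (ne_of_gt hKF0)]
        field_simp
      rw [this] at h1E
      simp only [hc]
      linarith
    have hlog : Real.log c < -(bstar * t) / 2 := by
      have := Real.log_lt_log hcpos hEc
      rwa [hE, Real.log_exp] at this
    have heq : T = -2 * Real.log c / bstar := by rw [hT]; ring
    rw [heq, lt_div_iff₀ hb]
    nlinarith
  have hτle : τ ≤ ENNReal.ofReal T := by
    by_contra h
    push_neg at h
    exact lt_irrefl T (key T ⟨hTpos.le, h⟩)
  exact ⟨lt_of_le_of_lt hτle ENNReal.ofReal_lt_top, hτle⟩

end
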